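/- Let N ≥ 1, let f_1, …, f_N be real numbers and let ρ > 0. Then strong Lagrangian duality holds for the hard-constrained χ²-divergence distributionally robust problem: sup over q in the probability simplex Δ^N with (1/(2N)) Σ_{i=1}^N (N q_i − 1)² ≤ ρ of Σ_{i=1}^N q_i f_i = inf over λ ∈ ℝ and ν > 0 of (ν/N) Σ_{i=1}^N φ*((f_i − λ)/ν) + λ + νρ, where φ*(s) = −½ for s < −1 and φ*(s) = ½s² + s for s ≥ −1. -/

import Mathlib

/-!
Weak duality is the Fenchel–Young inequality `s t - φ(t) ≤ φ*(s)` summed over the data points.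
For strong duality, let `V r` be the primal value at radius `r`. It is concave and nondecreasing
on `r ≥ 0`, because the χ²-divergence is convex and the objective is linear. Since `ρ > 0` is
an interior point, `V` has a supergradient `c ≥ 0` at `ρ`. For `ν = c + ε / ρ` the inner
supremum of the Lagrangian is attained at `q_i = (1 + (f_i - λ) / ν)₊ / N`, with `λ` chosen by
the intermediate value theorem so that `∑ q_i = 1`. Comparing `⟨q, f⟩` with `V (d q)` then
bounds the dual value by `V ρ + ε`.
-/

open Finset

/-- The conjugate of the (modified) χ²-divergence generator. -/
noncomputable def phiStar (s : ℝ) : ℝ :=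
  if s < -1 then -(1 / 2) else (1 / 2) * s ^ 2 + s

open Set

lemma le_phiStar (s : ℝ) {t : ℝ} (ht : 0 ≤ t) : s * t - 1 / 2 * (t - 1) ^ 2 ≤ phiStar s := by
  unfold phiStar
  split_ifs
  · nlinarith [sq_nonneg t]
  · nlinarith [sq_nonneg (s - t + 1)]

lemma phiStar_eq_mul_max_sub (s : ℝ) :
    phiStar s = s * max 0 (s + 1) - 1 / 2 * (max 0 (s + 1) - 1) ^ 2 := by
  unfold phiStar
  split_ifs with h
  · rw [max_eq_left (by linarith)]; ring
  · rw [max_eq_right (by linarith)]; ring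

lemma ConcaveOn.exists_nonneg_le_add_mul_sub {S : Set ℝ} {g : ℝ → ℝ} {x : ℝ}
    (hg : ConcaveOn ℝ S g) (hmono : MonotoneOn g S) (hx : x ∈ interior S) :
    ∃ c, 0 ≤ c ∧ ∀ y ∈ S, g y ≤ g x + c * (y - x) := by
  have hconv : ConvexOn ℝ S (-g) := hg.neg
  set d := derivWithin (-g) (Ioi x) x
  have hsuper : ∀ y ∈ S, g y ≤ g x + -d * (y - x) := by
    intro y hy
    rcases lt_trichotomy x y with hxy | rfl | hyx
    · have h := hconv.rightDeriv_le_slope_of_mem_interior hx hy hxy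
      rw [slope_def_field, le_div_iff₀ (sub_pos.2 hxy)] at h
      simp only [Pi.neg_apply] at h
      linarith
    · simp
    · have h := (hconv.slope_le_leftDeriv_of_mem_interior hy hx hyx).trans
        (hconv.leftDeriv_le_rightDeriv_of_mem_interior hx)
      rw [slope_def_field, div_le_iff₀ (sub_pos.2 hyx)] at h
      simp only [Pi.neg_apply] at h
      linarith
  refine ⟨-d, ?_, hsuper⟩
  obtain ⟨y, hxy, hy⟩ : ∃ y, x < y ∧ y ∈ S :=
    Filter.Eventually.exists_gt (mem_interior_iff_mem_nhds.mp hx)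
  have hgy := hmono (interior_subset hx) hy hxy.le
  nlinarith [hsuper y hy]

variable {ι : Type*} [Fintype ι]

noncomputable def chiSqDiv (q : ι → ℝ) : ℝ :=
  1 / (2 * (Fintype.card ι : ℝ)) * ∑ i, ((Fintype.card ι : ℝ) * q i - 1) ^ 2

lemma chiSqDiv_nonneg (q : ι → ℝ) : 0 ≤ chiSqDiv q := by
  unfold chiSqDiv; positivity

lemma continuous_chiSqDiv : Continuous (chiSqDiv : (ι → ℝ) → ℝ) := by
  unfold chiSqDiv; fun_prop

lemma convexOn_chiSqDiv : ConvexOn ℝ univ (chiSqDiv : (ι → ℝ) → ℝ) := by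
  refine ⟨convex_univ, fun q _ q' _ a b ha hb hab => ?_⟩
  set n := (Fintype.card ι : ℝ)
  have hsq : ∀ i, (n * (a * q i + b * q' i) - 1) ^ 2 ≤
      a * (n * q i - 1) ^ 2 + b * (n * q' i - 1) ^ 2 := fun i => by
    have h := (even_two.convexOn_pow (𝕜 := ℝ)).2 (Set.mem_univ (n * q i - 1))
      (Set.mem_univ (n * q' i - 1)) ha hb hab
    simp only [smul_eq_mul] at h
    rwa [show n * (a * q i + b * q' i) - 1 = a * (n * q i - 1) + b * (n * q' i - 1) by
      linear_combination hab]
  simp only [chiSqDiv, Pi.add_apply, Pi.smul_apply, smul_eq_mul]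
  calc _ ≤ 1 / (2 * n) * ∑ i, (a * (n * q i - 1) ^ 2 + b * (n * q' i - 1) ^ 2) := by
        gcongr with i; exact hsq i
    _ = _ := by rw [sum_add_distrib, ← mul_sum, ← mul_sum]; ring

def chiSqBall (r : ℝ) : Set (ι → ℝ) := {q ∈ stdSimplex ℝ ι | chiSqDiv q ≤ r}

noncomputable def robustValue (f : ι → ℝ) (r : ℝ) : ℝ :=
  sSup ((fun q => ∑ i, q i * f i) '' chiSqBall r)

lemma isCompact_chiSqBall (r : ℝ) : IsCompact (chiSqBall r : Set (ι → ℝ)) :=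
  (isCompact_stdSimplex ℝ ι).inter_right (isClosed_le continuous_chiSqDiv continuous_const)

lemma chiSqBall_mono {r s : ℝ} (hrs : r ≤ s) : (chiSqBall r : Set (ι → ℝ)) ⊆ chiSqBall s :=
  fun _ hq => ⟨hq.1, hq.2.trans hrs⟩

lemma bddAbove_image_chiSqBall (f : ι → ℝ) (r : ℝ) :
    BddAbove ((fun q => ∑ i, q i * f i) '' chiSqBall r) :=
  ((isCompact_chiSqBall r).image (by fun_prop)).bddAbove

lemma le_robustValue (f : ι → ℝ) {r : ℝ} {q : ι → ℝ} (hq : q ∈ chiSqBall r) :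
    ∑ i, q i * f i ≤ robustValue f r :=
  le_csSup (bddAbove_image_chiSqBall f r) (mem_image_of_mem _ hq)

/-- `λ + ν Eₚ[φ*((f - λ) / ν)]`, the supremum over `q ≥ 0` of the Lagrangian
`⟨q, f⟩ - ν d(q) - λ (∑ q - 1)`; the `ν ρ` term of the dual objective is left out. -/
noncomputable def chiSqDualFun (f : ι → ℝ) (l ν : ℝ) : ℝ :=
  ν / (Fintype.card ι : ℝ) * ∑ i, phiStar ((f i - l) / ν) + l

section Nonempty

variable [Nonempty ι]

lemma sum_mul_sub_mul_chiSqDiv_eq {q : ι → ℝ} (hq : ∑ i, q i = 1) (f : ι → ℝ) (l : ℝ)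
    {ν : ℝ} (hν : ν ≠ 0) :
    ∑ i, q i * f i - l - ν * chiSqDiv q =
      ν / (Fintype.card ι : ℝ) * ∑ i, ((f i - l) / ν * ((Fintype.card ι : ℝ) * q i)
        - 1 / 2 * ((Fintype.card ι : ℝ) * q i - 1) ^ 2) := by
  have hn : (Fintype.card ι : ℝ) ≠ 0 := Nat.cast_ne_zero.2 Fintype.card_ne_zero
  calc ∑ i, q i * f i - l - ν * chiSqDiv q
      = ∑ i, (q i * f i - l * q i
        - ν * (1 / (2 * (Fintype.card ι : ℝ)) * ((Fintype.card ι : ℝ) * q i - 1) ^ 2)) := by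
        simp only [sum_sub_distrib, ← mul_sum, hq, chiSqDiv]; ring
    _ = _ := by rw [mul_sum]; congr 1 with i; field_simp

lemma sub_mul_chiSqDiv_le_chiSqDualFun {q : ι → ℝ} (hq : q ∈ stdSimplex ℝ ι) (f : ι → ℝ)
    (l : ℝ) {ν : ℝ} (hν : 0 < ν) : ∑ i, q i * f i - ν * chiSqDiv q ≤ chiSqDualFun f l ν := by
  have h := sum_mul_sub_mul_chiSqDiv_eq hq.2 f l hν.ne'
  have hle : ν / (Fintype.card ι : ℝ) * ∑ i, ((f i - l) / ν * ((Fintype.card ι : ℝ) * q i)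
        - 1 / 2 * ((Fintype.card ι : ℝ) * q i - 1) ^ 2) ≤
      ν / (Fintype.card ι : ℝ) * ∑ i, phiStar ((f i - l) / ν) := by
    gcongr with i
    exact le_phiStar _ (mul_nonneg (Nat.cast_nonneg _) (hq.1 i))
  unfold chiSqDualFun
  linarith

lemma exists_sum_max_eq_card (f : ι → ℝ) {ν : ℝ} (hν : 0 < ν) :
    ∃ l, ∑ i, max 0 ((f i - l) / ν + 1) = Fintype.card ι := by
  obtain ⟨iM, hM⟩ := Finite.exists_max f
  obtain ⟨im, hm⟩ := Finite.exists_min f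
  have hcont : Continuous fun l => ∑ i, max 0 ((f i - l) / ν + 1) := by fun_prop
  refine intermediate_value_univ (f iM) (f im) hcont ⟨?_, ?_⟩
  · calc ∑ i, max 0 ((f i - f iM) / ν + 1) ≤ ∑ _i : ι, (1 : ℝ) := by
          gcongr with i
          have : (f i - f iM) / ν ≤ 0 := div_nonpos_of_nonpos_of_nonneg (by linarith [hM i]) hν.le
          exact max_le zero_le_one (by linarith)
      _ = _ := by simp
  · calc (Fintype.card ι : ℝ) = ∑ _i : ι, (1 : ℝ) := by simp
      _ ≤ _ := by
          gcongr with i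
          have : 0 ≤ (f i - f im) / ν := div_nonneg (by linarith [hm i]) hν.le
          exact le_max_of_le_right (by linarith)

lemma exists_chiSqDualFun_eq (f : ι → ℝ) {ν : ℝ} (hν : 0 < ν) :
    ∃ l, ∃ q ∈ stdSimplex ℝ ι, chiSqDualFun f l ν = ∑ i, q i * f i - ν * chiSqDiv q := by
  obtain ⟨l, hl⟩ := exists_sum_max_eq_card f hν
  have hn : (Fintype.card ι : ℝ) ≠ 0 := Nat.cast_ne_zero.2 Fintype.card_ne_zero
  set q : ι → ℝ := fun i => max 0 ((f i - l) / ν + 1) / Fintype.card ι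
  have hq1 : ∑ i, q i = 1 := by rw [← sum_div, hl, div_self hn]
  refine ⟨l, q, ⟨fun i => by positivity, hq1⟩, ?_⟩
  have hnq : ∀ i, (Fintype.card ι : ℝ) * q i = max 0 ((f i - l) / ν + 1) := fun i => by
    simp only [q]; field_simp
  have h := sum_mul_sub_mul_chiSqDiv_eq hq1 f l hν.ne'
  simp only [hnq, ← phiStar_eq_mul_max_sub] at h
  rw [chiSqDualFun, ← h]
  ring

lemma chiSqBall_nonempty {r : ℝ} (hr : 0 ≤ r) : (chiSqBall r : Set (ι → ℝ)).Nonempty := by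
  have hn : (Fintype.card ι : ℝ) ≠ 0 := Nat.cast_ne_zero.2 Fintype.card_ne_zero
  refine ⟨fun _ => 1 / Fintype.card ι, ⟨fun _ => by positivity, ?_⟩, ?_⟩
  · simp [hn]
  · simpa [chiSqDiv, hn] using hr

lemma exists_eq_robustValue (f : ι → ℝ) {r : ℝ} (hr : 0 ≤ r) :
    ∃ q ∈ chiSqBall r, ∑ i, q i * f i = robustValue f r :=
  ((isCompact_chiSqBall r).image (by fun_prop)).sSup_mem ((chiSqBall_nonempty hr).image _)

lemma robustValue_monotoneOn (f : ι → ℝ) : MonotoneOn (robustValue f) (Ici 0) :=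
  fun _ hr _ _ hrs => csSup_le_csSup (bddAbove_image_chiSqBall f _)
    ((chiSqBall_nonempty hr).image _) (image_mono (chiSqBall_mono hrs))

lemma robustValue_concaveOn (f : ι → ℝ) : ConcaveOn ℝ (Ici 0) (robustValue f) := by
  refine ⟨convex_Ici 0, fun r hr s hs a b ha hb hab => ?_⟩
  obtain ⟨q, hq, hqr⟩ := exists_eq_robustValue f hr
  obtain ⟨q', hq', hqs⟩ := exists_eq_robustValue f hs
  have hmix : a • q + b • q' ∈ chiSqBall (a * r + b * s) :=
    ⟨convex_stdSimplex ℝ ι hq.1 hq'.1 ha hb hab,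
      (convexOn_chiSqDiv.2 (mem_univ q) (mem_univ q') ha hb hab).trans
        (by simp only [smul_eq_mul]; gcongr; exacts [hq.2, hq'.2])⟩
  calc a • robustValue f r + b • robustValue f s
      = ∑ i, (a • q + b • q') i * f i := by
        simp only [← hqr, ← hqs, Pi.add_apply, Pi.smul_apply, smul_eq_mul, mul_sum,
          ← sum_add_distrib]
        congr 1 with i; ring
    _ ≤ robustValue f (a • r + b • s) := le_robustValue f hmix

lemma robustValue_le_chiSqDualFun_add (f : ι → ℝ) {ρ : ℝ} (hρ : 0 ≤ ρ) (l : ℝ)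
    {ν : ℝ} (hν : 0 < ν) : robustValue f ρ ≤ chiSqDualFun f l ν + ν * ρ := by
  refine csSup_le ((chiSqBall_nonempty hρ).image _) ?_
  rintro _ ⟨q, hq, rfl⟩
  nlinarith [sub_mul_chiSqDiv_le_chiSqDualFun hq.1 f l hν, hq.2]

lemma exists_chiSqDualFun_add_le (f : ι → ℝ) {ρ ε : ℝ} (hρ : 0 < ρ) (hε : 0 < ε) :
    ∃ l ν, 0 < ν ∧ chiSqDualFun f l ν + ν * ρ ≤ robustValue f ρ + ε := by
  obtain ⟨c, hc, hsuper⟩ := (robustValue_concaveOn f).exists_nonneg_le_add_mul_sub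
    (robustValue_monotoneOn f) (by rw [interior_Ici]; exact hρ)
  have hν : 0 < c + ε / ρ := by positivity
  obtain ⟨l, q, hq, hlq⟩ := exists_chiSqDualFun_eq f hν
  refine ⟨l, c + ε / ρ, hν, ?_⟩
  have hqf : ∑ i, q i * f i ≤ robustValue f ρ + c * (chiSqDiv q - ρ) :=
    (le_robustValue f ⟨hq, le_rfl⟩).trans (hsuper _ (chiSqDiv_nonneg q))
  have hslack : -ε ≤ ε / ρ * (chiSqDiv q - ρ) := by
    rw [div_mul_eq_mul_div, le_div_iff₀ hρ]
    nlinarith [chiSqDiv_nonneg q]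
  rw [hlq]
  linarith

end Nonempty

/-- Strong Lagrangian duality for the hard-constrained χ²-divergence DRO problem. -/
theorem dro_chi2_constrained_duality
    (N : ℕ) (hN : 1 ≤ N) (f : Fin N → ℝ) (ρ : ℝ) (hρ : 0 < ρ) :
    sSup {y : ℝ | ∃ q : Fin N → ℝ, (∀ i, 0 ≤ q i) ∧ (∑ i, q i = 1) ∧
        (1 / (2 * (N : ℝ))) * (∑ i, ((N : ℝ) * q i - 1) ^ 2) ≤ ρ ∧
        y = ∑ i, q i * f i} =
      sInf {y : ℝ | ∃ l ν : ℝ, 0 < ν ∧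
        y = (ν / (N : ℝ)) * (∑ i, phiStar ((f i - l) / ν)) + l + ν * ρ} := by
  have : Nonempty (Fin N) := ⟨⟨0, hN⟩⟩
  have hprimal : {y : ℝ | ∃ q : Fin N → ℝ, (∀ i, 0 ≤ q i) ∧ (∑ i, q i = 1) ∧
      (1 / (2 * (N : ℝ))) * (∑ i, ((N : ℝ) * q i - 1) ^ 2) ≤ ρ ∧ y = ∑ i, q i * f i} =
      (fun q => ∑ i, q i * f i) '' chiSqBall ρ := by
    ext y
    simp [chiSqBall, chiSqDiv, stdSimplex, eq_comm, and_assoc]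
  have hdual : {y : ℝ | ∃ l ν : ℝ, 0 < ν ∧
      y = (ν / (N : ℝ)) * (∑ i, phiStar ((f i - l) / ν)) + l + ν * ρ} =
      {y | ∃ l ν : ℝ, 0 < ν ∧ y = chiSqDualFun f l ν + ν * ρ} := by
    simp [chiSqDualFun]
  rw [hprimal, hdual]
  have hweak : ∀ y ∈ {y | ∃ l ν : ℝ, 0 < ν ∧ y = chiSqDualFun f l ν + ν * ρ},
      robustValue f ρ ≤ y := by
    rintro _ ⟨l, ν, hν, rfl⟩
    exact robustValue_le_chiSqDualFun_add f hρ.le l hν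
  refine le_antisymm (le_csInf ⟨_, 0, 1, one_pos, rfl⟩ hweak)
    (le_of_forall_pos_le_add fun ε hε => ?_)
  obtain ⟨l, ν, hν, hle⟩ := exists_chiSqDualFun_add_le f hρ hε
  exact (csInf_le ⟨_, hweak⟩ ⟨l, ν, hν, rfl⟩).trans hle
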